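/- Let S be a Markov semigroup and let T be a finite semigroup. Then the direct product S × T is a Markov semigroup if and only if S × T is finitely generated as a semigroup. -/

import Mathlib

open Function

/-- A language is regular if it is accepted by a deterministic finite automaton
with a finite state set. -/
def RegularLang {A : Type} (L : Language A) : Prop :=
  ∃ (Q : Type) (_ : Fintype Q) (M : DFA A Q), M.accepts = L

/-- The product of a nonempty word under the letter-assignment `φ`; the empty
word is sent to `none`. This is the induced map `φ⁺` on nonempty words. -/
def prodPlus {A S : Type} [Semigroup S] (φ : A → S) : List A → Option S
  | [] => none
  | a :: w => some (w.foldl (fun s b => s * φ b) (φ a))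

/-- The induced monoid homomorphism `φ*` from the free monoid of words. -/
def monProd {A M : Type} [Monoid M] (φ : A → M) (w : List A) : M :=
  (w.map φ).prod

/-- A semigroup Markov language for `S` over `A` (with respect to `φ`): a regular,
`+`-prefix-closed language of nonempty words mapping bijectively onto `S` under `φ⁺`. -/
structure IsSgMarkovLang {A S : Type} [Semigroup S] (φ : A → S) (L : Language A) : Prop where
  regular : RegularLang L
  not_empty_mem : [] ∉ L
  plus_prefix_closed : ∀ u v : List A, u ≠ [] → v ≠ [] → u ++ v ∈ L → u ∈ L
  unique_rep : ∀ s : S, ∃! w : List A, w ∈ L ∧ prodPlus φ w = some s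

/-- A robust semigroup Markov language: additionally every word of `L` has minimal
length among (nonempty) words representing the same element. -/
structure IsRobustSgMarkovLang {A S : Type} [Semigroup S] (φ : A → S) (L : Language A)
    extends IsSgMarkovLang φ L : Prop where
  min_length : ∀ w ∈ L, ∀ v : List A, prodPlus φ v = prodPlus φ w → w.length ≤ v.length

/-- A monoid Markov language for `M` over `A` (with respect to `φ`): a regular,
prefix-closed language mapping bijectively onto `M` under `φ*`. -/
structure IsMonMarkovLang {A M : Type} [Monoid M] (φ : A → M) (L : Language A) : Prop where
  regular : RegularLang L
  prefix_closed : ∀ u v : List A, u ++ v ∈ L → u ∈ L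
  unique_rep : ∀ m : M, ∃! w : List A, w ∈ L ∧ monProd φ w = m

/-- A robust monoid Markov language: additionally every word of `L` has minimal
length among words representing the same element. -/
structure IsRobustMonMarkovLang {A M : Type} [Monoid M] (φ : A → M) (L : Language A)
    extends IsMonMarkovLang φ L : Prop where
  min_length : ∀ w ∈ L, ∀ v : List A, monProd φ v = monProd φ w → w.length ≤ v.length

/-- `S` is Markov as a semigroup. -/
def SgMarkov (S : Type) [Semigroup S] : Prop :=
  ∃ (A : Type) (_ : Fintype A) (φ : A → S),
    (∀ s : S, ∃ w : List A, prodPlus φ w = some s) ∧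
    ∃ L : Language A, IsSgMarkovLang φ L

/-- `S` is robustly Markov (as a semigroup) with respect to some alphabet. -/
def SgRobustlyMarkov (S : Type) [Semigroup S] : Prop :=
  ∃ (A : Type) (_ : Fintype A) (φ : A → S),
    (∀ s : S, ∃ w : List A, prodPlus φ w = some s) ∧
    ∃ L : Language A, IsRobustSgMarkovLang φ L

/-- `S` is strongly Markov (as a semigroup). -/
def SgStronglyMarkov (S : Type) [Semigroup S] : Prop :=
  ∀ (A : Type) [Fintype A] (φ : A → S),
    (∀ s : S, ∃ w : List A, prodPlus φ w = some s) →
    ∃ L : Language A, IsRobustSgMarkovLang φ L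

/-- `M` is Markov as a monoid. -/
def MonMarkov (M : Type) [Monoid M] : Prop :=
  ∃ (A : Type) (_ : Fintype A) (φ : A → M),
    Surjective (monProd φ) ∧ ∃ L : Language A, IsMonMarkovLang φ L

/-- `M` is robustly Markov (as a monoid) with respect to some alphabet. -/
def MonRobustlyMarkov (M : Type) [Monoid M] : Prop :=
  ∃ (A : Type) (_ : Fintype A) (φ : A → M),
    Surjective (monProd φ) ∧ ∃ L : Language A, IsRobustMonMarkovLang φ L

/-- `M` is strongly Markov (as a monoid). -/
def MonStronglyMarkov (M : Type) [Monoid M] : Prop :=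
  ∀ (A : Type) [Fintype A] (φ : A → M),
    Surjective (monProd φ) →
    ∃ L : Language A, IsRobustMonMarkovLang φ L


/-!
A Markov semigroup is generated by the image of its alphabet. Conversely, if `S` is finite then
so is `S × T`, and the words of length one form a Markov language. Otherwise, as `S × T` is
finitely generated and `S` is infinite, every `t : T` is the product of arbitrarily long words
over `T`. Cutting out factors between two prefixes with equal products shows that for every `n`
some word of length between `n` and `n + |T| + 1` multiplies to `t`; grouping its letters gives a
word of exactly `n` chunks of length at most `|T| + 2`. The Markov word of `(s, t)` pairs the
Markov word of `s` letter by letter with the lexicographically least chunk word of the same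
length multiplying to `t`. These least words form a regular language by Myhill–Nerode: whether
`x ++ y` is least depends on `x` only through its product and the products of the smaller words
of the same length.
-/

section WordProduct

variable {A B S T : Type} [Semigroup S] [Semigroup T]

theorem List.foldl_mul_eq_mul_foldl (f : A → S) (w : List A) (x y : S) :
    w.foldl (fun s b => s * f b) (x * y) = x * w.foldl (fun s b => s * f b) y := by
  induction w generalizing y with
  | nil => rfl
  | cons a w ih => simp only [List.foldl_cons, mul_assoc, ih]

theorem prodPlus_append (f : A → S) (u v : List A) :
    prodPlus f (u ++ v) = (prodPlus f u).merge (· * ·) (prodPlus f v) := by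
  match u, v with
  | [], _ => simp [prodPlus]
  | _ :: _, [] => simp [prodPlus]
  | a :: u, b :: v =>
    simp [prodPlus, List.foldl_append, List.foldl_mul_eq_mul_foldl]

theorem prodPlus_cons (f : A → S) (a : A) (w : List A) :
    prodPlus f (a :: w) = (some (f a)).merge (· * ·) (prodPlus f w) :=
  prodPlus_append f [a] w

theorem prodPlus_eq_none_iff {f : A → S} {w : List A} : prodPlus f w = none ↔ w = [] := by
  cases w <;> simp [prodPlus]

theorem prodPlus_append_congr {f : A → S} {u v : List A} (h : prodPlus f u = prodPlus f v)
    (y : List A) : prodPlus f (u ++ y) = prodPlus f (v ++ y) := by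
  rw [prodPlus_append, prodPlus_append, h]

theorem prodPlus_map (f : B → S) (g : A → B) (w : List A) :
    prodPlus f (w.map g) = prodPlus (f ∘ g) w := by
  cases w <;> simp [prodPlus, List.foldl_map]

theorem prodPlus_comp_mulHom (h : S →ₙ* T) (f : A → S) (w : List A) :
    prodPlus (h ∘ f) w = (prodPlus f w).map h := by
  induction w with
  | nil => rfl
  | cons a w ih => cases hw : prodPlus f w <;> simp_all [prodPlus_cons]

theorem prodPlus_eq_some_mk_iff {ψ : A → S × T} {w : List A} {s : S} {t : T} :
    prodPlus ψ w = some (s, t) ↔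
      prodPlus (Prod.fst ∘ ψ) w = some s ∧ prodPlus (Prod.snd ∘ ψ) w = some t := by
  rw [← MulHom.coe_fst, ← MulHom.coe_snd, prodPlus_comp_mulHom, prodPlus_comp_mulHom]
  cases prodPlus ψ w <;> simp [Prod.ext_iff]

theorem mem_closure_range_iff_prodPlus (f : A → S) {x : S} :
    x ∈ Subsemigroup.closure (Set.range f) ↔ ∃ w, prodPlus f w = some x := by
  constructor
  · intro hx
    induction hx using Subsemigroup.closure_induction with
    | mem y hy =>
      obtain ⟨a, rfl⟩ := hy
      exact ⟨[a], rfl⟩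
    | mul y z _ _ hy hz =>
      obtain ⟨u, hu⟩ := hy
      obtain ⟨v, hv⟩ := hz
      exact ⟨u ++ v, by simp [prodPlus_append, hu, hv]⟩
  · rintro ⟨w, hw⟩
    induction w generalizing x with
    | nil => simp [prodPlus] at hw
    | cons a w ih =>
      have ha : f a ∈ Subsemigroup.closure (Set.range f) :=
        Subsemigroup.subset_closure (Set.mem_range_self a)
      rw [prodPlus_cons] at hw
      cases hw' : prodPlus f w with
      | none => simp_all
      | some y =>
        simp only [hw', Option.merge_some_some, Option.some.injEq] at hw
        exact hw ▸ Subsemigroup.mul_mem _ ha (ih hw')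

end WordProduct

section Pumping

variable {A T : Type} [Semigroup T] [Finite T]

/-- Two of the first `Nat.card T + 2` prefixes of `w` have the same product, so the factor
between them can be cut out. -/
theorem exists_shorter_prodPlus_eq (f : A → T) {w : List A} (hw : Nat.card T < w.length) :
    ∃ w', w'.length < w.length ∧ w.length ≤ w'.length + (Nat.card T + 1) ∧
      prodPlus f w' = prodPlus f w := by
  have := Fintype.ofFinite T
  obtain ⟨i, j, hij, heq⟩ := Fintype.exists_ne_map_eq_of_card_lt
    (fun i : Fin (Nat.card T + 2) => prodPlus f (w.take i)) (by simp [Nat.card_eq_fintype_card])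
  wlog hlt : i < j generalizing i j
  · exact this j i hij.symm heq.symm (lt_of_le_of_ne (not_lt.1 hlt) hij.symm)
  have hi := Fin.lt_def.1 hlt
  have hj := j.isLt
  refine ⟨w.take i ++ w.drop j, ?_, ?_, ?_⟩
  · simp only [List.length_append, List.length_take, List.length_drop]; omega
  · simp only [List.length_append, List.length_take, List.length_drop]; omega
  · rw [prodPlus_append_congr heq, List.take_append_drop]

theorem exists_prodPlus_eq_length_between (f : A → T) {w : List A} {n : ℕ} (hn : n ≤ w.length) :
    ∃ w', n ≤ w'.length ∧ w'.length ≤ n + (Nat.card T + 1) ∧ prodPlus f w' = prodPlus f w := by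
  induction hlen : w.length using Nat.strong_induction_on generalizing w with
  | _ m ih =>
    by_cases hm : m ≤ n + (Nat.card T + 1)
    · exact ⟨w, hlen ▸ hn, hlen ▸ hm, rfl⟩
    · obtain ⟨w', h1, h2, h3⟩ := exists_shorter_prodPlus_eq f (w := w) (by omega)
      obtain ⟨w'', h4, h5, h6⟩ := ih _ (hlen ▸ h1) (by omega) rfl
      exact ⟨w'', h4, h5, h6.trans h3⟩

end Pumping

abbrev Chunk (α : Type) (k : ℕ) : Type := {l : List α // l ≠ [] ∧ l.length ≤ k}

namespace Chunk

variable {α T : Type} {k : ℕ}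

instance [Finite α] : Finite (Chunk α k) :=
  ((List.finite_length_le α k).subset fun _ hl => hl.2).to_subtype

theorem exists_flatten_eq (v : List α) {n : ℕ} (h₁ : n ≤ v.length) (h₂ : v.length ≤ k * n) :
    ∃ cs : List (Chunk α k), cs.length = n ∧ (cs.map Subtype.val).flatten = v := by
  induction n generalizing v with
  | zero => exact ⟨[], rfl, (List.length_eq_zero_iff.1 (by omega)).symm⟩
  | succ n ih =>
    rw [Nat.mul_succ] at h₂
    have hk : n ≤ k * n := Nat.le_mul_of_pos_left n (Nat.pos_of_ne_zero (by rintro rfl; omega))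
    set d := min k (v.length - n)
    obtain ⟨cs, hlen, hflat⟩ := ih (v.drop d) (by simp only [List.length_drop]; omega)
      (by simp only [List.length_drop]; omega)
    have hd : 0 < d := lt_min (Nat.pos_of_ne_zero (by rintro rfl; omega)) (by omega)
    have hhead : v.take d ≠ [] ∧ (v.take d).length ≤ k := by
      refine ⟨fun h => ?_, (List.length_take_le d v).trans (min_le_left _ _)⟩
      rcases List.take_eq_nil_iff.1 h with h | rfl <;> simp_all
    refine ⟨⟨v.take d, hhead⟩ :: cs, by simp [hlen], ?_⟩
    simp only [List.map_cons, List.flatten_cons, hflat, List.take_append_drop]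

variable [Semigroup T]

noncomputable def prod (f : α → T) (c : Chunk α k) : T :=
  (prodPlus f c.1).get (Option.isSome_iff_ne_none.2 (prodPlus_eq_none_iff.not.2 c.2.1))

theorem prodPlus_val (f : α → T) (c : Chunk α k) : prodPlus f c.1 = some (c.prod f) :=
  (Option.some_get _).symm

theorem prodPlus_prod (f : α → T) (cs : List (Chunk α k)) :
    prodPlus (prod f) cs = prodPlus f (cs.map Subtype.val).flatten := by
  induction cs with
  | nil => rfl
  | cons c cs ih =>
    rw [prodPlus_cons, List.map_cons, List.flatten_cons, prodPlus_append, ih, prodPlus_val]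

theorem exists_prodPlus_prod_eq [Finite T] {f : α → T} {w : List α} {n : ℕ} (hn : 0 < n)
    (hw : n ≤ w.length) :
    ∃ cs : List (Chunk α (Nat.card T + 2)),
      cs.length = n ∧ prodPlus (prod f) cs = prodPlus f w := by
  obtain ⟨w', hlo, hhi, hw'⟩ := exists_prodPlus_eq_length_between f hw
  have : Nat.card T ≤ Nat.card T * n := Nat.le_mul_of_pos_right _ hn
  obtain ⟨cs, hlen, hflat⟩ := exists_flatten_eq (k := Nat.card T + 2) w' hlo
    (by rw [Nat.add_mul]; omega)
  exact ⟨cs, hlen, by rw [prodPlus_prod, hflat, hw']⟩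

end Chunk

theorem List.append_lt_append_iff_of_length_eq {B : Type} [LinearOrder B] {u v x y : List B}
    (h : u.length = x.length) : u ++ v < x ++ y ↔ u < x ∨ u = x ∧ v < y := by
  induction u generalizing x with
  | nil => simp_all [List.length_eq_zero_iff.1 h.symm]
  | cons a u ih =>
    obtain ⟨b, x, rfl⟩ := List.exists_cons_of_length_eq_add_one h.symm
    simp only [List.cons_append, List.cons_lt_cons_iff, List.cons.injEq, ih (Nat.succ.inj h)]
    tauto

section LexLeast

variable {B T : Type} [LinearOrder B] [Semigroup T] (f : B → T)

def lexLeastReps : Language B :=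
  {u | ∀ v, v.length = u.length → prodPlus f v = prodPlus f u → u ≤ v}

def lexSmallerProds (x : List B) : Set (Option T) :=
  {p | ∃ v, v.length = x.length ∧ v < x ∧ prodPlus f v = p}

/-- The left quotient of `lexLeastReps f` by a word `x` with `prodPlus f x = a` and
`lexSmallerProds f x = P`. -/
def lexLeastQuotient (a : Option T) (P : Set (Option T)) : Language B :=
  {y | (∀ p ∈ P, ∀ v, v.length = y.length →
      p.merge (· * ·) (prodPlus f v) ≠ a.merge (· * ·) (prodPlus f y)) ∧
    ∀ v, v.length = y.length → a.merge (· * ·) (prodPlus f v) = a.merge (· * ·) (prodPlus f y) →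
      y ≤ v}

variable {f}

theorem lexLeastReps_of_append_mem {u y : List B} (h : u ++ y ∈ lexLeastReps f) :
    u ∈ lexLeastReps f := by
  intro v hv hp
  by_contra hlt
  refine not_le.2 ((List.append_lt_append_iff_of_length_eq hv).2 (Or.inl (not_le.1 hlt)))
    (h (v ++ y) (by simp [hv]) (prodPlus_append_congr hp y))

theorem existsUnique_mem_lexLeastReps [Finite B] {n : ℕ} {p : Option T}
    (h : ∃ u, u.length = n ∧ prodPlus f u = p) :
    ∃! u, u ∈ lexLeastReps f ∧ u.length = n ∧ prodPlus f u = p := by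
  have hfin : {u | u.length = n ∧ prodPlus f u = p}.Finite :=
    (List.finite_length_eq B n).subset fun _ hu => hu.1
  obtain ⟨m, hm, hmin⟩ := Set.exists_min_image _ id hfin h
  refine ⟨m, ⟨fun v hv hp => hmin v ⟨hv.trans hm.1, hp.trans hm.2⟩, hm⟩, ?_⟩
  rintro u ⟨hu, hlen, hprod⟩
  exact le_antisymm (hu m (hm.1.trans hlen.symm) (hm.2.trans hprod.symm)) (hmin u ⟨hlen, hprod⟩)

theorem leftQuotient_lexLeastReps (x : List B) :
    (lexLeastReps f).leftQuotient x = lexLeastQuotient f (prodPlus f x) (lexSmallerProds f x) := by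
  ext y
  rw [Language.mem_leftQuotient]
  constructor
  · intro hxy
    constructor
    · rintro _ ⟨u, hlen, hlt, rfl⟩ v hv heq
      refine not_le.2 ((List.append_lt_append_iff_of_length_eq hlen).2 (Or.inl hlt))
        (hxy (u ++ v) (by simp [hlen, hv]) ?_)
      rw [prodPlus_append, prodPlus_append, heq]
    · intro v hv heq
      by_contra hlt
      refine not_le.2 ((List.append_lt_append_iff_of_length_eq rfl).2
        (Or.inr ⟨rfl, not_le.1 hlt⟩)) (hxy (x ++ v) (by simp [hv]) ?_)
      rw [prodPlus_append, prodPlus_append, heq]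
  · rintro ⟨hsmaller, hequal⟩ w hw hprod
    by_contra hlt
    rw [← List.take_append_drop x.length w] at hlt hprod
    rw [List.length_append] at hw
    have h₁ : (w.take x.length).length = x.length := by simp only [List.length_take]; omega
    have h₂ : (w.drop x.length).length = y.length := by simp only [List.length_drop]; omega
    rw [prodPlus_append, prodPlus_append] at hprod
    rcases (List.append_lt_append_iff_of_length_eq h₁).1 (not_le.1 hlt) with hlt | ⟨heq, hlt⟩
    · exact hsmaller _ ⟨_, h₁, hlt, rfl⟩ _ h₂ hprod
    · rw [heq] at hprod
      exact not_le.2 hlt (hequal _ h₂ hprod)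

theorem isRegular_lexLeastReps [Finite T] : (lexLeastReps f).IsRegular := by
  refine Language.IsRegular.of_finite_range_leftQuotient <|
    (Set.finite_range (uncurry (lexLeastQuotient f))).subset ?_
  rintro _ ⟨x, rfl⟩
  exact ⟨(prodPlus f x, lexSmallerProds f x), (leftQuotient_lexLeastReps x).symm⟩

end LexLeast

theorem Language.isRegular_setOf_length_eq (α : Type) (n : ℕ) :
    Language.IsRegular {w : List α | w.length = n} := by
  refine Language.IsRegular.of_finite_range_leftQuotient <|
    (Set.finite_range fun m : Fin (n + 2) => ({y | m + y.length = n} : Language α)).subset ?_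
  rintro _ ⟨x, rfl⟩
  refine ⟨⟨min x.length (n + 1), by omega⟩, Set.ext fun y => ?_⟩
  change min x.length (n + 1) + y.length = n ↔ (x ++ y).length = n
  rw [List.length_append]
  omega

theorem sgMarkov_of_finite (U : Type) [Semigroup U] [Finite U] : SgMarkov U := by
  have := Fintype.ofFinite U
  refine ⟨U, inferInstance, id, fun s => ⟨[s], rfl⟩, {w | w.length = 1},
    Language.isRegular_setOf_length_eq U 1, Nat.zero_ne_one, fun u v hu hv h => ?_, fun s => ?_⟩
  · have := List.length_pos_iff.2 hu
    have := List.length_pos_iff.2 hv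
    have : (u ++ v).length = 1 := h
    rw [List.length_append] at this
    omega
  · refine ⟨[s], ⟨rfl, rfl⟩, ?_⟩
    rintro w ⟨hw, hws⟩
    obtain ⟨a, rfl⟩ := List.length_eq_one_iff.1 hw
    simpa [prodPlus] using hws

section Product

variable {A B S T : Type} [Semigroup S] [Semigroup T]

theorem prodPlus_prodMap_eq_some_iff {φ : A → S} {g : B → T} {w : List (A × B)} {s : S} {t : T} :
    prodPlus (Prod.map φ g) w = some (s, t) ↔
      prodPlus φ (w.map Prod.fst) = some s ∧ prodPlus g (w.map Prod.snd) = some t := by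
  rw [prodPlus_eq_some_mk_iff, prodPlus_map, prodPlus_map]
  rfl

theorem IsSgMarkovLang.prod {φ : A → S} {L : Language A} (hL : IsSgMarkovLang φ L) {g : B → T}
    {G : Language B} (hG : G.IsRegular) (hGprefix : ∀ u v, u ++ v ∈ G → u ∈ G)
    (hGrep : ∀ (t : T) (n : ℕ), 0 < n → ∃! u, u ∈ G ∧ u.length = n ∧ prodPlus g u = some t) :
    IsSgMarkovLang (Prod.map φ g) {w | w.map Prod.fst ∈ L ∧ w.map Prod.snd ∈ G} where
  regular := by
    obtain ⟨σ, _, M, rfl⟩ := hL.regular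
    obtain ⟨τ, _, N, rfl⟩ := hG
    refine ⟨σ × τ, inferInstance, (M.comap Prod.fst).inter (N.comap Prod.snd), ?_⟩
    rw [DFA.accepts_inter, DFA.accepts_comap, DFA.accepts_comap]
    rfl
  not_empty_mem h := hL.not_empty_mem h.1
  plus_prefix_closed := by
    rintro u v hu hv ⟨hwL, hwG⟩
    rw [List.map_append] at hwL hwG
    exact ⟨hL.plus_prefix_closed _ _ (by simpa) (by simpa) hwL, hGprefix _ _ hwG⟩
  unique_rep := by
    rintro ⟨s, t⟩
    obtain ⟨us, ⟨husL, hus⟩, hus_unique⟩ := hL.unique_rep s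
    have hn : 0 < us.length := List.length_pos_iff.2 fun h => hL.not_empty_mem (h ▸ husL)
    obtain ⟨ut, ⟨hutG, hutlen, hut⟩, hut_unique⟩ := hGrep t us.length hn
    have hfst : (us.zip ut).map Prod.fst = us := List.map_fst_zip hutlen.ge
    have hsnd : (us.zip ut).map Prod.snd = ut := List.map_snd_zip hutlen.le
    refine ⟨us.zip ut, ⟨⟨by rwa [hfst], by rwa [hsnd]⟩, ?_⟩, ?_⟩
    · rw [prodPlus_prodMap_eq_some_iff, hfst, hsnd]
      exact ⟨hus, hut⟩
    · rintro w ⟨⟨hwL, hwG⟩, hw⟩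
      rw [prodPlus_prodMap_eq_some_iff] at hw
      have h₁ : w.map Prod.fst = us := hus_unique _ ⟨hwL, hw.1⟩
      have h₂ : w.map Prod.snd = ut :=
        hut_unique _ ⟨hwG, by simpa using congrArg List.length h₁, hw.2⟩
      exact List.zip_of_prod h₁ h₂

end Product

theorem SgMarkov.prod_of_exists_long_words {S T : Type} [Semigroup S] [Semigroup T] [Finite T]
    (hS : SgMarkov S)
    (hlong : ∀ (t : T) (n : ℕ), ∃ w : List T, n ≤ w.length ∧ prodPlus id w = some t) :
    SgMarkov (S × T) := by
  obtain ⟨A, _, φ, -, L, hL⟩ := hS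
  let B := Chunk T (Nat.card T + 2)
  let _ : LinearOrder B := WellOrderingRel.isWellOrder.linearOrder
  have := Fintype.ofFinite B
  have hK := hL.prod isRegular_lexLeastReps (fun _ _ => lexLeastReps_of_append_mem)
    fun t n hn => by
      obtain ⟨w, hnw, hw⟩ := hlong t n
      exact existsUnique_mem_lexLeastReps <|
        (Chunk.exists_prodPlus_prod_eq hn hnw).imp fun _ h => ⟨h.1, h.2.trans hw⟩
  exact ⟨A × B, inferInstance, _, fun x => (hK.unique_rep x).exists.imp fun _ h => h.2, _, hK⟩

/-- Since `S` is infinite, some `(s, t)` needs a long word over the generators, whose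
`T`-components form a long word for `t`. -/
theorem exists_long_word_prodPlus_eq {A S T : Type} [Semigroup S] [Semigroup T] [Finite A]
    [Infinite S] {φ : A → S × T} (hφ : ∀ x, ∃ w, prodPlus φ w = some x) (t : T) (n : ℕ) :
    ∃ w : List T, n ≤ w.length ∧ prodPlus id w = some t := by
  by_contra! hshort
  choose w hw using fun s : S => hφ (s, t)
  have hlen (s : S) : (w s).length < n := by
    by_contra! h
    refine hshort ((w s).map (Prod.snd ∘ φ)) (by simpa using h) ?_
    rw [prodPlus_map]
    exact (prodPlus_eq_some_mk_iff.1 (hw s)).2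
  have : Finite {l : List A // l.length < n} := (List.finite_length_lt A n).to_subtype
  suffices Finite S from not_finite S
  refine Finite.of_injective (fun s => (⟨w s, hlen s⟩ : {l : List A // l.length < n}))
    fun s s' h => ?_
  have hs := (prodPlus_eq_some_mk_iff.1 (hw s)).1
  rw [show w s = w s' from congrArg Subtype.val h, (prodPlus_eq_some_mk_iff.1 (hw s')).1] at hs
  exact (Option.some.inj hs).symm

/-- If `S` is a Markov semigroup and `T` is a finite semigroup, then `S × T` is Markov
iff it is finitely generated as a semigroup. -/
theorem stmt18 {S T : Type} [Semigroup S] [Semigroup T] [Finite T]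
    (hS : SgMarkov S) :
    SgMarkov (S × T) ↔
      ∃ X : Finset (S × T), Subsemigroup.closure (X : Set (S × T)) = ⊤ := by
  constructor
  · rintro ⟨A, _, φ, hφ, -⟩
    refine ⟨(Set.finite_range φ).toFinset, ?_⟩
    rw [Set.Finite.coe_toFinset, eq_top_iff]
    exact fun x _ => (mem_closure_range_iff_prodPlus φ).2 (hφ x)
  · rintro ⟨X, hX⟩
    rcases finite_or_infinite S with hfin | hinf
    · exact sgMarkov_of_finite (S × T)
    · have hgen (x : S × T) : ∃ w : List X, prodPlus Subtype.val w = some x :=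
        (mem_closure_range_iff_prodPlus _).1 (by rw [Subtype.range_coe_subtype]; simp [hX])
      exact hS.prod_of_exists_long_words (exists_long_word_prodPlus_eq hgen)
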